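/- arXiv:1012.1086 — 2 statements merged into one kernel-verified Lean document; each statement's English description precedes it below -/
import Mathlib

section
/- For every real n×p matrix X, the squared ℓ2→ℓ1 operator norm of X equals the ℓ∞→ℓ1 operator norm of X Xᵀ; that is, ‖X‖_{2→1}² = ‖X Xᵀ‖_{∞→1}. -/
open Matrix
open scoped BigOperators

/-- The ℓ1 norm of a vector: sum of absolute values of the entries. -/
def l1norm {n : ℕ} (v : Fin n → ℝ) : ℝ := ∑ i, |v i|

/-- The Euclidean (ℓ2) norm of a vector. -/
noncomputable def l2norm {p : ℕ} (u : Fin p → ℝ) : ℝ := Real.sqrt (∑ j, u j ^ 2)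

/-- The ℓ2 → ℓ1 operator norm of a matrix. -/
noncomputable def norm2to1 {n p : ℕ} (X : Matrix (Fin n) (Fin p) ℝ) : ℝ :=
  sSup {t : ℝ | ∃ u : Fin p → ℝ, l2norm u ≤ 1 ∧ t = l1norm (X.mulVec u)}

/-- The ℓ∞ → ℓ1 operator norm of a matrix. -/
noncomputable def normInfto1 {n m : ℕ} (A : Matrix (Fin n) (Fin m) ℝ) : ℝ :=
  sSup {t : ℝ | ∃ u : Fin m → ℝ, (∀ j, |u j| ≤ 1) ∧ t = l1norm (A.mulVec u)}

/-!
Both norms are governed by `c = max {‖Xᵀ s‖₂ : ‖s‖_∞ ≤ 1}`. Since `‖y‖₁ = max {s ⬝ y : ‖s‖_∞ ≤ 1}`,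
we get `‖X u‖₁ = max_s (Xᵀ s) ⬝ u`, so `‖X‖_{2→1} = c` by Cauchy–Schwarz, with equality at
`u = Xᵀ s₀ / c` for a maximiser `s₀`. Likewise `‖X Xᵀ v‖₁ = max_s (Xᵀ s) ⬝ (Xᵀ v) ≤ c²`, with
equality at `v = s₀`.
-/

lemma csSup_eq_of_forall_le_of_exists_ge {α : Type*} [ConditionallyCompleteLattice α]
    {S : Set α} {a : α} (hub : ∀ t ∈ S, t ≤ a) (hlb : ∃ t ∈ S, a ≤ t) : sSup S = a := by
  obtain ⟨t, ht, hat⟩ := hlb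
  exact le_antisymm (csSup_le ⟨t, ht⟩ hub) (le_csSup_of_le ⟨a, hub⟩ ht hat)

section Norms

variable {n : ℕ}

lemma dotProduct_le_l1norm {s : Fin n → ℝ} (hs : ∀ i, |s i| ≤ 1) (y : Fin n → ℝ) :
    s ⬝ᵥ y ≤ l1norm y := by
  refine Finset.sum_le_sum fun i _ => ?_
  calc s i * y i ≤ |s i| * |y i| := (le_abs_self _).trans (abs_mul _ _).le
    _ ≤ |y i| := mul_le_of_le_one_left (abs_nonneg _) (hs i)

lemma exists_dotProduct_eq_l1norm (y : Fin n → ℝ) :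
    ∃ s : Fin n → ℝ, (∀ i, |s i| ≤ 1) ∧ s ⬝ᵥ y = l1norm y := by
  refine ⟨fun i => SignType.sign (y i), fun i => ?_, ?_⟩
  · rcases lt_trichotomy (y i) 0 with h | h | h <;> simp [h]
  · exact Finset.sum_congr rfl fun i _ => sign_mul_self (y i)

lemma l2norm_nonneg (u : Fin n → ℝ) : 0 ≤ l2norm u := Real.sqrt_nonneg _

lemma dotProduct_self_eq_l2norm_sq (u : Fin n → ℝ) : u ⬝ᵥ u = l2norm u ^ 2 := by
  rw [l2norm, Real.sq_sqrt (Finset.sum_nonneg fun j _ => sq_nonneg (u j))]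
  exact Finset.sum_congr rfl fun j _ => (sq (u j)).symm

lemma dotProduct_le_l2norm_mul_l2norm (u v : Fin n → ℝ) : u ⬝ᵥ v ≤ l2norm u * l2norm v :=
  Real.sum_mul_le_sqrt_mul_sqrt _ _ _

lemma l2norm_smul (c : ℝ) (u : Fin n → ℝ) : l2norm (c • u) = |c| * l2norm u := by
  rw [l2norm, l2norm, ← Real.sqrt_sq_eq_abs, ← Real.sqrt_mul (sq_nonneg c), Finset.mul_sum]
  simp only [Pi.smul_apply, smul_eq_mul, mul_pow]

lemma continuous_l2norm : Continuous (l2norm : (Fin n → ℝ) → ℝ) := by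
  unfold l2norm
  fun_prop

lemma exists_isMaxOn_forall_abs_le_one {f : (Fin n → ℝ) → ℝ} (hf : Continuous f) :
    ∃ s₀ : Fin n → ℝ, (∀ i, |s₀ i| ≤ 1) ∧ ∀ s : Fin n → ℝ, (∀ i, |s i| ≤ 1) → f s ≤ f s₀ := by
  have hball : ∀ s : Fin n → ℝ, s ∈ Metric.closedBall 0 1 ↔ ∀ i, |s i| ≤ 1 := fun s => by
    simp only [mem_closedBall_zero_iff, pi_norm_le_iff_of_nonneg zero_le_one, Real.norm_eq_abs]
  obtain ⟨s₀, hs₀, hmax⟩ := (isCompact_closedBall (0 : Fin n → ℝ) 1).exists_isMaxOn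
    ⟨0, Metric.mem_closedBall_self zero_le_one⟩ hf.continuousOn
  exact ⟨s₀, (hball s₀).1 hs₀, fun s hs => hmax ((hball s).2 hs)⟩

end Norms

section Matrix

variable {n p : ℕ} (X : Matrix (Fin n) (Fin p) ℝ)

lemma dotProduct_mulVec_eq_transpose (s : Fin n → ℝ) (u : Fin p → ℝ) :
    s ⬝ᵥ X *ᵥ u = Xᵀ *ᵥ s ⬝ᵥ u := by
  rw [dotProduct_mulVec, mulVec_transpose]

lemma exists_l1norm_mulVec_eq_transpose_dotProduct (u : Fin p → ℝ) :
    ∃ s : Fin n → ℝ, (∀ i, |s i| ≤ 1) ∧ l1norm (X *ᵥ u) = Xᵀ *ᵥ s ⬝ᵥ u := by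
  obtain ⟨s, hs, hsy⟩ := exists_dotProduct_eq_l1norm (X *ᵥ u)
  exact ⟨s, hs, by rw [← hsy, dotProduct_mulVec_eq_transpose]⟩

variable {X} {s₀ : Fin n → ℝ} (hs₀ : ∀ i, |s₀ i| ≤ 1)
  (hmax : ∀ s : Fin n → ℝ, (∀ i, |s i| ≤ 1) → l2norm (Xᵀ *ᵥ s) ≤ l2norm (Xᵀ *ᵥ s₀))
include hs₀ hmax

lemma norm2to1_eq_l2norm_transpose_mulVec_of_isMax : norm2to1 X = l2norm (Xᵀ *ᵥ s₀) := by
  set c := l2norm (Xᵀ *ᵥ s₀)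
  refine csSup_eq_of_forall_le_of_exists_ge ?_ ⟨_, ⟨c⁻¹ • Xᵀ *ᵥ s₀, ?_, rfl⟩, ?_⟩
  · rintro t ⟨u, hu, rfl⟩
    obtain ⟨s, hs, hsu⟩ := exists_l1norm_mulVec_eq_transpose_dotProduct X u
    calc l1norm (X *ᵥ u) = Xᵀ *ᵥ s ⬝ᵥ u := hsu
      _ ≤ l2norm (Xᵀ *ᵥ s) * l2norm u := dotProduct_le_l2norm_mul_l2norm _ _
      _ ≤ c * 1 := mul_le_mul (hmax s hs) hu (l2norm_nonneg u) (l2norm_nonneg _)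
      _ = c := mul_one c
  · rw [l2norm_smul, abs_inv, abs_of_nonneg (l2norm_nonneg _)]
    exact inv_mul_le_one_of_le₀ le_rfl (l2norm_nonneg _)
  -- `c⁻¹ * c * c = c` holds also when `c = 0`, so no case split is needed.
  · calc c = c⁻¹ * c ^ 2 := by rw [sq, ← mul_assoc, inv_mul_mul_self]
      _ = s₀ ⬝ᵥ X *ᵥ (c⁻¹ • Xᵀ *ᵥ s₀) := by
        rw [dotProduct_mulVec_eq_transpose, dotProduct_smul, dotProduct_self_eq_l2norm_sq,
          smul_eq_mul]
      _ ≤ l1norm (X *ᵥ (c⁻¹ • Xᵀ *ᵥ s₀)) := dotProduct_le_l1norm hs₀ _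

lemma normInfto1_mul_transpose_eq_l2norm_transpose_mulVec_sq_of_isMax :
    normInfto1 (X * Xᵀ) = l2norm (Xᵀ *ᵥ s₀) ^ 2 := by
  refine csSup_eq_of_forall_le_of_exists_ge ?_ ⟨_, ⟨s₀, hs₀, rfl⟩, ?_⟩
  · rintro t ⟨v, hv, rfl⟩
    obtain ⟨s, hs, hsv⟩ := exists_l1norm_mulVec_eq_transpose_dotProduct X (Xᵀ *ᵥ v)
    calc l1norm ((X * Xᵀ) *ᵥ v) = Xᵀ *ᵥ s ⬝ᵥ Xᵀ *ᵥ v := by rw [← mulVec_mulVec, hsv]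
      _ ≤ l2norm (Xᵀ *ᵥ s) * l2norm (Xᵀ *ᵥ v) := dotProduct_le_l2norm_mul_l2norm _ _
      _ ≤ l2norm (Xᵀ *ᵥ s₀) * l2norm (Xᵀ *ᵥ s₀) :=
        mul_le_mul (hmax s hs) (hmax v hv) (l2norm_nonneg _) (l2norm_nonneg _)
      _ = l2norm (Xᵀ *ᵥ s₀) ^ 2 := (sq _).symm
  · calc l2norm (Xᵀ *ᵥ s₀) ^ 2 = s₀ ⬝ᵥ X *ᵥ Xᵀ *ᵥ s₀ := by
          rw [dotProduct_mulVec_eq_transpose, dotProduct_self_eq_l2norm_sq]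
      _ ≤ l1norm ((X * Xᵀ) *ᵥ s₀) := by
          rw [← mulVec_mulVec]
          exact dotProduct_le_l1norm hs₀ _

end Matrix

theorem norm2to1_sq_eq_normInfto1 {n p : ℕ} (X : Matrix (Fin n) (Fin p) ℝ) :
    norm2to1 X ^ 2 = normInfto1 (X * Xᵀ) := by
  obtain ⟨s₀, hs₀, hmax⟩ :=
    exists_isMaxOn_forall_abs_le_one (continuous_l2norm.comp (continuous_const.matrix_mulVec
      continuous_id) : Continuous fun s => l2norm (Xᵀ *ᵥ s))
  rw [norm2to1_eq_l2norm_transpose_mulVec_of_isMax hs₀ hmax,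
    normInfto1_mul_transpose_eq_l2norm_transpose_mulVec_sq_of_isMax hs₀ hmax]
end

section
/- (Low leverage of the LLD solution.) Let X be a real n×p matrix and γ > 0, and suppose (P⋆, C⋆) is an optimal point of the low-leverage decomposition (LLD) program for X with parameter γ. Then every diagonal entry of the hat matrix H = P⋆ (P⋆ᵀ P⋆)† P⋆ᵀ—the matrix of the orthogonal projection of ℝⁿ onto the column space of P⋆—is at most γ²; equivalently, for every standard basis vector eᵢ of ℝⁿ, the squared Euclidean norm of the orthogonal projection of eᵢ onto the column space of P⋆ is at most γ². -/
open Matrix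
open scoped BigOperators

/-- The trace inner product ⟨A, B⟩ = trace(Aᵀ B) on real matrices. -/
def tinner {n p : ℕ} (A B : Matrix (Fin n) (Fin p) ℝ) : ℝ := ∑ i, ∑ j, A i j * B i j

/-- The spectral norm (ℓ2 → ℓ2 operator norm) of a matrix. -/
noncomputable def norm2to2 {n p : ℕ} (Q : Matrix (Fin n) (Fin p) ℝ) : ℝ :=
  sSup {t : ℝ | ∃ u : Fin p → ℝ, l2norm u ≤ 1 ∧ t = l2norm (Q.mulVec u)}

/-- The nuclear norm, defined as the dual of the spectral norm with respect to
the trace inner product. -/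
noncomputable def nuclearNorm {n p : ℕ} (P : Matrix (Fin n) (Fin p) ℝ) : ℝ :=
  sSup {t : ℝ | ∃ A : Matrix (Fin n) (Fin p) ℝ, norm2to2 A ≤ 1 ∧ t = tinner P A}

/-- The row-sum norm ‖C‖_{2,1}: the sum of the Euclidean norms of the rows. -/
noncomputable def rowSumNorm {n p : ℕ} (C : Matrix (Fin n) (Fin p) ℝ) : ℝ :=
  ∑ i, l2norm (C i)

/-- The column space of a matrix, as a subspace of Euclidean space. -/
def colSpace {n p : ℕ} (P : Matrix (Fin n) (Fin p) ℝ) :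
    Submodule ℝ (EuclideanSpace ℝ (Fin n)) :=
  Submodule.span ℝ {v : EuclideanSpace ℝ (Fin n) | ∃ j, v = fun i => P i j}

/-!
Choose an orthonormal basis `b` of `ℝᵖ` diagonalizing `PᵀP`, so that the vectors `P bₖ = σₖ uₖ`
are pairwise orthogonal. The partial isometry `bₖ ↦ uₖ` certifies `‖P‖_* ≥ ∑ σₖ`, and the
projection of `eᵢ` onto the column space of `P` has norm `‖c‖`, where `cₖ = ⟪uₖ, eᵢ⟫`.
Moving the rank-one matrix `ε eᵢ vᵀ`, with `v = ∑ cₖ bₖ`, from `P` to `C` brings the nuclear norm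
down to at most `∑ ‖σₖ uₖ - ε cₖ eᵢ‖ ≤ ∑ σₖ - ε ‖c‖² + O(ε²)` and raises `γ ‖C‖_{2,1}` by at most
`γ ε ‖v‖ = γ ε ‖c‖`. Optimality of `(P, C)` for all small `ε > 0` forces `‖c‖² ≤ γ ‖c‖`.
-/

open WithLp (toLp ofLp)
open scoped RealInnerProductSpace

section InnerProductSpace

variable {F : Type*} [NormedAddCommGroup F] [InnerProductSpace ℝ F]

lemma norm_sub_smul_le_second_order {w e : F} (he : ‖e‖ ≤ 1) {c : ℝ} (hc : c = ⟪w, e⟫ / ‖w‖)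
    (ε : ℝ) : ‖w - (ε * c) • e‖ ≤ ‖w‖ - ε * c ^ 2 + ε ^ 2 * (c ^ 2 / (2 * ‖w‖)) := by
  rcases eq_or_ne w 0 with rfl | hw
  · simp [hc]
  have hσ : 0 < ‖w‖ := norm_pos_iff.mpr hw
  have hwe : ⟪w, e⟫ = ‖w‖ * c := by rw [hc]; field_simp
  have hsq : ‖w - (ε * c) • e‖ ^ 2 ≤ ‖w‖ ^ 2 - 2 * ε * ‖w‖ * c ^ 2 + ε ^ 2 * c ^ 2 := by
    rw [norm_sub_sq_real, real_inner_smul_right, norm_smul, hwe, mul_pow, Real.norm_eq_abs,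
      sq_abs]
    nlinarith [mul_nonneg (sq_nonneg (ε * c)) (norm_nonneg e)]
  calc ‖w - (ε * c) • e‖ ≤ (‖w - (ε * c) • e‖ ^ 2 + ‖w‖ ^ 2) / (2 * ‖w‖) := by
        rw [le_div_iff₀ (by positivity)]
        nlinarith [sq_nonneg (‖w - (ε * c) • e‖ - ‖w‖)]
    _ ≤ (2 * ‖w‖ ^ 2 - 2 * ε * ‖w‖ * c ^ 2 + ε ^ 2 * c ^ 2) / (2 * ‖w‖) :=
        div_le_div_of_nonneg_right (by linarith) (by positivity)
    _ = ‖w‖ - ε * c ^ 2 + ε ^ 2 * (c ^ 2 / (2 * ‖w‖)) := by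
        field_simp

lemma norm_sum_sq_of_pairwise_inner_eq_zero {ι : Type*} [Fintype ι] {f : ι → F}
    (hf : Pairwise fun k l => ⟪f k, f l⟫ = 0) : ‖∑ k, f k‖ ^ 2 = ∑ k, ‖f k‖ ^ 2 := by
  classical
  rw [← real_inner_self_eq_norm_sq, sum_inner]
  refine Finset.sum_congr rfl fun k _ => ?_
  rw [inner_sum, Finset.sum_eq_single k (fun l _ hlk => hf hlk.symm) (by simp),
    real_inner_self_eq_norm_sq]

lemma norm_sum_rankOne_le_one {ι E : Type*} [Fintype ι] [NormedAddCommGroup E]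
    [InnerProductSpace ℝ E] (b : OrthonormalBasis ι ℝ E) {u : ι → F}
    (hu : Pairwise fun k l => ⟪u k, u l⟫ = 0) (hu1 : ∀ k, ‖u k‖ ≤ 1) :
    ‖∑ k, InnerProductSpace.rankOne ℝ (u k) (b k)‖ ≤ 1 := by
  refine ContinuousLinearMap.opNorm_le_bound _ zero_le_one fun x => ?_
  rw [one_mul, ← sq_le_sq₀ (norm_nonneg _) (norm_nonneg _), ← b.sum_sq_inner_right x]
  simp only [_root_.sum_apply, InnerProductSpace.rankOne_apply]
  rw [norm_sum_sq_of_pairwise_inner_eq_zero fun k l hkl => by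
    dsimp only
    rw [real_inner_smul_left, real_inner_smul_right, hu hkl, mul_zero, mul_zero]]
  refine Finset.sum_le_sum fun k _ => ?_
  rw [norm_smul, mul_pow, Real.norm_eq_abs, sq_abs]
  exact mul_le_of_le_one_right (sq_nonneg _) (pow_le_one₀ (norm_nonneg _) (hu1 k))

end InnerProductSpace

theorem LinearMap.exists_orthonormalBasis_pairwise_inner_eq_zero {𝕜 E F : Type*} [RCLike 𝕜]
    [NormedAddCommGroup E] [InnerProductSpace 𝕜 E] [FiniteDimensional 𝕜 E]
    [NormedAddCommGroup F] [InnerProductSpace 𝕜 F] [FiniteDimensional 𝕜 F] (T : E →ₗ[𝕜] F) :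
    ∃ b : OrthonormalBasis (Fin (Module.finrank 𝕜 E)) 𝕜 E,
      Pairwise fun k l => inner 𝕜 (T (b k)) (T (b l)) = 0 := by
  have hS := T.isSymmetric_adjoint_comp_self
  refine ⟨hS.eigenvectorBasis rfl, fun k l hkl => ?_⟩
  dsimp only
  rw [← LinearMap.adjoint_inner_right, ← LinearMap.comp_apply, hS.apply_eigenvectorBasis,
    inner_smul_right, (hS.eigenvectorBasis rfl).orthonormal.2 hkl, mul_zero]

section LeftSingularVectors

variable {ι E F : Type*} [NormedAddCommGroup E] [InnerProductSpace ℝ E]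
  [NormedAddCommGroup F] [InnerProductSpace ℝ F] (T : E →ₗ[ℝ] F) (b : ι → E)

/-- When `b` is orthonormal and the vectors `T (b k)` are pairwise orthogonal, these are the left
singular vectors of `T`, with the value `0` where the singular value `‖T (b k)‖` vanishes. -/
noncomputable def leftSingularVector (k : ι) : F := ‖T (b k)‖⁻¹ • T (b k)

noncomputable def leftSingularCoords [Fintype ι] (y : F) : EuclideanSpace ℝ ι :=
  toLp 2 fun k => ⟪leftSingularVector T b k, y⟫

lemma norm_leftSingularVector_le_one (k : ι) : ‖leftSingularVector T b k‖ ≤ 1 := by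
  rcases eq_or_ne (T (b k)) 0 with h | h
  · simp [leftSingularVector, h]
  · exact (norm_smul_inv_norm h).le

lemma inner_leftSingularVector_left (k : ι) (y : F) :
    ⟪leftSingularVector T b k, y⟫ = ⟪T (b k), y⟫ / ‖T (b k)‖ := by
  rw [leftSingularVector, real_inner_smul_left, inv_mul_eq_div]

lemma norm_smul_leftSingularVector (k : ι) :
    ‖T (b k)‖ • leftSingularVector T b k = T (b k) := by
  rcases eq_or_ne (T (b k)) 0 with h | h
  · simp [leftSingularVector, h]
  · rw [leftSingularVector, smul_inv_smul₀ (norm_ne_zero_iff.mpr h)]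

lemma inner_leftSingularVector_apply_self (k : ι) :
    ⟪leftSingularVector T b k, T (b k)⟫ = ‖T (b k)‖ := by
  rw [inner_leftSingularVector_left, real_inner_self_eq_norm_sq]
  rcases eq_or_ne ‖T (b k)‖ 0 with h | h
  · simp [h]
  · field_simp

lemma leftSingularVector_mem_range (k : ι) : leftSingularVector T b k ∈ LinearMap.range T :=
  Submodule.smul_mem _ _ (LinearMap.mem_range_self T (b k))

variable {T b}

lemma inner_leftSingularVector_apply_of_ne (hb : Pairwise fun k l => ⟪T (b k), T (b l)⟫ = 0)
    {k l : ι} (hkl : k ≠ l) : ⟪leftSingularVector T b k, T (b l)⟫ = 0 := by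
  rw [inner_leftSingularVector_left, hb hkl, zero_div]

lemma pairwise_inner_leftSingularVector (hb : Pairwise fun k l => ⟪T (b k), T (b l)⟫ = 0) :
    Pairwise fun k l => ⟪leftSingularVector T b k, leftSingularVector T b l⟫ = 0 := by
  intro k l hkl
  simp only [leftSingularVector, real_inner_smul_left, real_inner_smul_right, hb hkl, mul_zero]

variable [Fintype ι] [FiniteDimensional ℝ E]

lemma starProjection_range_eq_sum (b : OrthonormalBasis ι ℝ E)
    (hb : Pairwise fun k l => ⟪T (b k), T (b l)⟫ = 0) (y : F) :
    (LinearMap.range T).starProjection y =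
      ∑ k, ⟪leftSingularVector T b k, y⟫ • leftSingularVector T b k := by
  classical
  refine Submodule.eq_starProjection_of_mem_of_inner_eq_zero
    (Submodule.sum_mem _ fun k _ => Submodule.smul_mem _ _ (leftSingularVector_mem_range T b k))
    ?_
  rintro _ ⟨x, rfl⟩
  rw [← b.sum_repr' x, map_sum, inner_sum]
  refine Finset.sum_eq_zero fun l _ => ?_
  have hl : ⟪leftSingularVector T b l, y⟫ * ‖T (b l)‖ = ⟪T (b l), y⟫ := by
    rw [mul_comm, ← real_inner_smul_left, norm_smul_leftSingularVector]
  rw [map_smul, real_inner_smul_right, inner_sub_left, sum_inner,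
    Finset.sum_eq_single l (fun k _ hkl => by
      rw [real_inner_smul_left, inner_leftSingularVector_apply_of_ne hb hkl, mul_zero]) (by simp),
    real_inner_smul_left, inner_leftSingularVector_apply_self, hl, real_inner_comm (T (b l)) y,
    sub_self, mul_zero]

lemma norm_starProjection_range (b : OrthonormalBasis ι ℝ E)
    (hb : Pairwise fun k l => ⟪T (b k), T (b l)⟫ = 0) (y : F) :
    ‖(LinearMap.range T).starProjection y‖ = ‖leftSingularCoords T b y‖ := by
  refine (sq_eq_sq₀ (norm_nonneg _) (norm_nonneg _)).mp ?_
  have hcoord : ∀ k, ⟪leftSingularVector T b k, (LinearMap.range T).starProjection y⟫ =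
      ⟪leftSingularVector T b k, y⟫ := fun k => by
    rw [← Submodule.inner_starProjection_left_eq_right,
      Submodule.starProjection_eq_self_iff.mpr (leftSingularVector_mem_range T b k)]
  rw [← real_inner_self_eq_norm_sq, EuclideanSpace.real_norm_sq_eq]
  nth_rw 1 [starProjection_range_eq_sum b hb y]
  simp [sum_inner, real_inner_smul_left, hcoord, leftSingularCoords, sq]

end LeftSingularVectors

section MatrixNorms

variable {n p : ℕ}

lemma l2norm_eq_norm (u : Fin p → ℝ) : l2norm u = ‖toLp 2 u‖ := by
  simp [l2norm, EuclideanSpace.norm_eq]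

lemma l2norm_add_le (x y : Fin p → ℝ) : l2norm (x + y) ≤ l2norm x + l2norm y := by
  simpa only [l2norm_eq_norm, WithLp.toLp_add] using norm_add_le (toLp 2 x) (toLp 2 y)

lemma l2norm_smul_s13 (r : ℝ) (x : Fin p → ℝ) : l2norm (r • x) = |r| * l2norm x := by
  rw [l2norm_eq_norm, l2norm_eq_norm, WithLp.toLp_smul, norm_smul, Real.norm_eq_abs]

lemma rowSumNorm_add_le (A B : Matrix (Fin n) (Fin p) ℝ) :
    rowSumNorm (A + B) ≤ rowSumNorm A + rowSumNorm B := by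
  rw [rowSumNorm, rowSumNorm, rowSumNorm, ← Finset.sum_add_distrib]
  exact Finset.sum_le_sum fun a _ => l2norm_add_le (A a) (B a)

lemma rowSumNorm_smul (r : ℝ) (A : Matrix (Fin n) (Fin p) ℝ) :
    rowSumNorm (r • A) = |r| * rowSumNorm A := by
  rw [rowSumNorm, rowSumNorm, Finset.mul_sum]
  exact Finset.sum_congr rfl fun a _ => l2norm_smul_s13 r (A a)

lemma rowSumNorm_vecMulVec (a : Fin n → ℝ) (x : Fin p → ℝ) :
    rowSumNorm (vecMulVec a x) = (∑ i, |a i|) * l2norm x := by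
  rw [rowSumNorm, Finset.sum_mul]
  exact Finset.sum_congr rfl fun i _ => l2norm_smul_s13 (a i) x

lemma colSpace_eq_range (P : Matrix (Fin n) (Fin p) ℝ) :
    colSpace P = LinearMap.range (toEuclideanLin P) := by
  have hcol : ∀ j, toEuclideanLin P (EuclideanSpace.single j 1) = toLp 2 fun i => P i j := by
    intro j; ext i; simp [toLpLin_apply]
  refine le_antisymm (Submodule.span_le.mpr ?_) ?_
  · rintro v ⟨j, hj⟩
    exact ⟨EuclideanSpace.single j 1, by rw [hcol, ← hj]⟩
  · rintro _ ⟨x, rfl⟩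
    rw [← (EuclideanSpace.basisFun (Fin p) ℝ).sum_repr x, map_sum]
    refine Submodule.sum_mem _ fun j _ => ?_
    rw [map_smul]
    exact Submodule.smul_mem _ _ (Submodule.subset_span ⟨j, by simp [hcol]⟩)

lemma toEuclideanLin_vecMulVec (a : EuclideanSpace ℝ (Fin n)) (v x : EuclideanSpace ℝ (Fin p)) :
    toEuclideanLin (vecMulVec a v) x = ⟪v, x⟫ • a := by
  ext j
  simp [toLpLin_apply, vecMulVec_mulVec, EuclideanSpace.inner_eq_star_dotProduct, dotProduct_comm]

lemma norm2to2_eq_opNorm (Q : Matrix (Fin n) (Fin p) ℝ) :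
    norm2to2 Q = ‖LinearMap.toContinuousLinearMap (toEuclideanLin Q)‖ := by
  rw [← ContinuousLinearMap.sSup_unitClosedBall_eq_norm, norm2to2]
  congr 1
  ext t
  constructor
  · rintro ⟨u, hu, rfl⟩
    exact ⟨toLp 2 u, by simpa [l2norm_eq_norm] using hu, by simp [l2norm_eq_norm, toLpLin_apply]⟩
  · rintro ⟨x, hx, rfl⟩
    exact ⟨ofLp x, by simpa [l2norm_eq_norm] using hx, by simp [l2norm_eq_norm, toLpLin_apply]⟩

lemma norm_toEuclideanLin_le {A : Matrix (Fin n) (Fin p) ℝ} (hA : norm2to2 A ≤ 1)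
    (x : EuclideanSpace ℝ (Fin p)) : ‖toEuclideanLin A x‖ ≤ ‖x‖ := by
  rw [norm2to2_eq_opNorm] at hA
  simpa using (LinearMap.toContinuousLinearMap (toEuclideanLin A)).le_of_opNorm_le hA x

variable {ι : Type*} [Fintype ι]

lemma tinner_eq_sum_inner (b : OrthonormalBasis ι ℝ (EuclideanSpace ℝ (Fin p)))
    (A B : Matrix (Fin n) (Fin p) ℝ) :
    tinner A B = ∑ k, ⟪toEuclideanLin A (b k), toEuclideanLin B (b k)⟫ := by
  have hrow : ∀ (M : Matrix (Fin n) (Fin p) ℝ) k a,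
      toEuclideanLin M (b k) a = ⟪toLp 2 (M a), b k⟫ := by
    intro M k a
    simp [toLpLin_apply, mulVec, EuclideanSpace.inner_eq_star_dotProduct, dotProduct_comm]
  calc tinner A B = ∑ a, ⟪toLp 2 (A a), toLp 2 (B a)⟫ := by
        simp [tinner, PiLp.inner_apply, mul_comm]
    _ = ∑ a, ∑ k, ⟪toLp 2 (A a), b k⟫ * ⟪b k, toLp 2 (B a)⟫ := by
        simp_rw [b.sum_inner_mul_inner]
    _ = ∑ k, ⟪toEuclideanLin A (b k), toEuclideanLin B (b k)⟫ := by
        rw [Finset.sum_comm]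
        simp [PiLp.inner_apply, hrow, mul_comm]

lemma tinner_le_sum_norm (b : OrthonormalBasis ι ℝ (EuclideanSpace ℝ (Fin p)))
    {Q A : Matrix (Fin n) (Fin p) ℝ} (hA : norm2to2 A ≤ 1) :
    tinner Q A ≤ ∑ k, ‖toEuclideanLin Q (b k)‖ := by
  rw [tinner_eq_sum_inner b]
  refine Finset.sum_le_sum fun k _ => ?_
  calc ⟪toEuclideanLin Q (b k), toEuclideanLin A (b k)⟫
      ≤ ‖toEuclideanLin Q (b k)‖ * ‖toEuclideanLin A (b k)‖ := real_inner_le_norm _ _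
    _ ≤ ‖toEuclideanLin Q (b k)‖ := by
        refine mul_le_of_le_one_right (norm_nonneg _) ?_
        simpa using norm_toEuclideanLin_le hA (b k)

lemma nuclearNorm_le_sum_norm (b : OrthonormalBasis ι ℝ (EuclideanSpace ℝ (Fin p)))
    (Q : Matrix (Fin n) (Fin p) ℝ) : nuclearNorm Q ≤ ∑ k, ‖toEuclideanLin Q (b k)‖ := by
  refine csSup_le ⟨tinner Q 0, 0, by simp [norm2to2_eq_opNorm], rfl⟩ ?_
  rintro _ ⟨A, hA, rfl⟩
  exact tinner_le_sum_norm b hA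

lemma tinner_le_nuclearNorm {Q A : Matrix (Fin n) (Fin p) ℝ} (hA : norm2to2 A ≤ 1) :
    tinner Q A ≤ nuclearNorm Q := by
  set b := EuclideanSpace.basisFun (Fin p) ℝ
  refine le_csSup ⟨∑ k, ‖toEuclideanLin Q (b k)‖, ?_⟩ ⟨A, hA, rfl⟩
  rintro _ ⟨B, hB, rfl⟩
  exact tinner_le_sum_norm b hB

lemma sum_norm_le_nuclearNorm (b : OrthonormalBasis ι ℝ (EuclideanSpace ℝ (Fin p)))
    {P : Matrix (Fin n) (Fin p) ℝ}
    (hb : Pairwise fun k l => ⟪toEuclideanLin P (b k), toEuclideanLin P (b l)⟫ = 0) :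
    ∑ k, ‖toEuclideanLin P (b k)‖ ≤ nuclearNorm P := by
  classical
  set u := leftSingularVector (toEuclideanLin P) b
  -- the dual certificate is the partial isometry `b k ↦ u k`
  set L := ∑ k, InnerProductSpace.rankOne ℝ (u k) (b k)
  have hLb : ∀ k, L (b k) = u k := fun k => by
    simp [L, b.inner_eq_ite, ite_smul]
  have hL : norm2to2 (toEuclideanLin.symm L.toLinearMap) ≤ 1 := by
    rw [norm2to2_eq_opNorm, LinearEquiv.apply_symm_apply]
    exact norm_sum_rankOne_le_one b (pairwise_inner_leftSingularVector hb)
      (norm_leftSingularVector_le_one _ _)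
  calc ∑ k, ‖toEuclideanLin P (b k)‖ = tinner P (toEuclideanLin.symm L.toLinearMap) := by
        simp [tinner_eq_sum_inner b, hLb, real_inner_comm, u, inner_leftSingularVector_apply_self]
    _ ≤ nuclearNorm P := tinner_le_nuclearNorm hL

lemma exists_nuclearNorm_sub_smul_vecMulVec_le
    {P : Matrix (Fin n) (Fin p) ℝ} (b : OrthonormalBasis ι ℝ (EuclideanSpace ℝ (Fin p)))
    (hb : Pairwise fun k l => ⟪toEuclideanLin P (b k), toEuclideanLin P (b l)⟫ = 0)
    {e : EuclideanSpace ℝ (Fin n)} (he : ‖e‖ ≤ 1) :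
    ∃ K : ℝ, ∀ ε : ℝ,
      nuclearNorm (P - ε • vecMulVec e (b.repr.symm (leftSingularCoords (toEuclideanLin P) b e)))
        ≤ nuclearNorm P - ε * ‖leftSingularCoords (toEuclideanLin P) b e‖ ^ 2 + ε ^ 2 * K := by
  set T := toEuclideanLin P
  set c := leftSingularCoords T b e
  refine ⟨∑ k, c k ^ 2 / (2 * ‖T (b k)‖), fun ε => ?_⟩
  have hcol : ∀ k, toEuclideanLin (P - ε • vecMulVec e (b.repr.symm c)) (b k)
      = T (b k) - (ε * c k) • e := fun k => by
    rw [map_sub, map_smul, LinearMap.sub_apply, LinearMap.smul_apply, toEuclideanLin_vecMulVec,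
      smul_smul, real_inner_comm, ← b.repr_apply_apply, LinearIsometryEquiv.apply_symm_apply]
  calc nuclearNorm (P - ε • vecMulVec e (b.repr.symm c))
      ≤ ∑ k, ‖T (b k) - (ε * c k) • e‖ := by
        simpa only [hcol] using nuclearNorm_le_sum_norm b (P - ε • vecMulVec e (b.repr.symm c))
    _ ≤ ∑ k, (‖T (b k)‖ - ε * c k ^ 2 + ε ^ 2 * (c k ^ 2 / (2 * ‖T (b k)‖))) :=
        Finset.sum_le_sum fun k _ =>
          norm_sub_smul_le_second_order he (inner_leftSingularVector_left T b k e) ε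
    _ = ∑ k, ‖T (b k)‖ - ε * ‖c‖ ^ 2 + ε ^ 2 * ∑ k, c k ^ 2 / (2 * ‖T (b k)‖) := by
        simp [Finset.sum_add_distrib, Finset.sum_sub_distrib, Finset.mul_sum,
          EuclideanSpace.real_norm_sq_eq]
    _ ≤ _ := by linarith [sum_norm_le_nuclearNorm b hb]

end MatrixNorms

lemma le_mul_rowSumNorm_of_lld_optimal {n p : ℕ} {X P C : Matrix (Fin n) (Fin p) ℝ} {γ : ℝ}
    (hγ : 0 ≤ γ) (hPC : P + C = X)
    (hopt : ∀ P' C' : Matrix (Fin n) (Fin p) ℝ, P' + C' = X →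
      nuclearNorm P + γ * rowSumNorm C ≤ nuclearNorm P' + γ * rowSumNorm C')
    (D : Matrix (Fin n) (Fin p) ℝ) {s K : ℝ}
    (hD : ∀ ε > 0, nuclearNorm (P - ε • D) ≤ nuclearNorm P - ε * s + ε ^ 2 * K) :
    s ≤ γ * rowSumNorm D := by
  refine le_of_forall_pos_le_add fun δ hδ => ?_
  set ε := δ / (|K| + 1)
  have hε : 0 < ε := by positivity
  have hrow : rowSumNorm (C + ε • D) ≤ rowSumNorm C + ε * rowSumNorm D := by
    simpa only [rowSumNorm_smul, abs_of_pos hε] using rowSumNorm_add_le C (ε • D)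
  have hobj := hopt (P - ε • D) (C + ε • D) (by rw [← hPC]; abel)
  have hεs : ε * s ≤ ε * (γ * rowSumNorm D + ε * K) := by
    nlinarith [hobj, hD ε hε, mul_le_mul_of_nonneg_left hrow hγ]
  have hεK : ε * K ≤ δ := by
    calc ε * K ≤ ε * (|K| + 1) := by gcongr; linarith [le_abs_self K]
      _ = δ := div_mul_cancel₀ δ (by positivity)
  linarith [le_of_mul_le_mul_left hεs hε]

theorem lld_low_leverage {n p : ℕ} (X P C : Matrix (Fin n) (Fin p) ℝ)
    (γ : ℝ) (hγ : 0 < γ) (hPC : P + C = X)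
    (hopt : ∀ P' C' : Matrix (Fin n) (Fin p) ℝ, P' + C' = X →
      nuclearNorm P + γ * rowSumNorm C ≤ nuclearNorm P' + γ * rowSumNorm C') :
    ∀ i : Fin n,
      ‖((colSpace P).orthogonalProjectionOnto (EuclideanSpace.single i 1) :
          EuclideanSpace ℝ (Fin n))‖ ^ 2 ≤ γ ^ 2 := by
  intro i
  obtain ⟨b, hb⟩ := (toEuclideanLin P).exists_orthonormalBasis_pairwise_inner_eq_zero
  set e : EuclideanSpace ℝ (Fin n) := EuclideanSpace.single i 1
  set c := leftSingularCoords (toEuclideanLin P) b e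
  obtain ⟨K, hK⟩ := exists_nuclearNorm_sub_smul_vecMulVec_le b hb (e := e) (by simp [e])
  have hc : ‖c‖ ^ 2 ≤ γ * ‖c‖ := by
    simpa [rowSumNorm_vecMulVec, e, l2norm_eq_norm, Pi.single_apply, apply_ite] using
      le_mul_rowSumNorm_of_lld_optimal hγ.le hPC hopt _ fun ε _ => hK ε
  have hcγ : ‖c‖ ≤ γ := by nlinarith [norm_nonneg c]
  rw [← Submodule.starProjection_apply]
  simp only [colSpace_eq_range]
  rw [norm_starProjection_range b hb]
  gcongr
end
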